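/- arXiv:2303.13170 — 2 statements merged into one kernel-verified Lean document; each statement's English description precedes it below -/
import Mathlib

section
/- Fix β ∈ (1,2) and a threshold sequence u = (u_n)_{n≥1} with each u_n ∈ [1,(β−1)⁻¹]. For any sequence (n_m)_{m≥1} of positive real numbers with n_m → ∞ as m → ∞, and for every ε > 0, the Lebesgue measure of the set {x ∈ [0,1] : |k(m,u,x) − m·log 2/log β| > ε·n_m} tends to 0 as m → ∞ (with the convention that the inequality holds whenever k(m,u,x) = ∞). That is, (1/n_m)(k(m,u,x) − m·log 2/log β) converges to 0 in probability with respect to Lebesgue measure. -/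
/-!
Because `x = ∑_{n ≤ k} b_n β⁻ⁿ + β⁻ᵏ x_k` and the orbit `x_k` stays in `[0, (β-1)⁻¹]`, the interval
`I_k(u,x)` contains `x` and has length `β⁻ᵏ (β-1)⁻¹`. Comparing lengths, `I_k ⊆ D_m(x)` forces
`β^k ≥ 2^m`, so `k(m,u,x) ≥ m log 2 / log β` always. Conversely `I_K ⊆ D_m(x)` as soon as `x` is
farther than `β⁻ᴷ (β-1)⁻¹` from every dyadic point `j 2⁻ᵐ`. With `K = ⌊m log 2 / log β + t⌋` the
exceptional set is therefore covered by `2^m + 1` intervals of total length `O(2^m β⁻ᴷ) = O(β⁻ᵗ)`,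
which tends to `0` for `t = ε n_m`.
-/

open MeasureTheory Filter Set Real

/-- Orbit of the β-encoder: `betaIter β u x n` is the iterate `x_n`, where
`x_0 = x` and `x_n = T_{u_n}(x_{n-1})`. -/
noncomputable def betaIter (β : ℝ) (u : ℕ → ℝ) (x : ℝ) : ℕ → ℝ
  | 0 => x
  | n + 1 =>
      if β * betaIter β u x n < u (n + 1) then β * betaIter β u x n
      else β * betaIter β u x n - 1

/-- The bit `b_n` produced by the β-encoder at step `n ≥ 1`. -/
noncomputable def betaBit (β : ℝ) (u : ℕ → ℝ) (x : ℝ) (n : ℕ) : ℝ :=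
  if β * betaIter β u x (n - 1) < u n then 0 else 1

/-- The interval `I_k(u,x)` determined by the first `k` output bits. -/
noncomputable def betaI (β : ℝ) (u : ℕ → ℝ) (x : ℝ) (k : ℕ) : Set ℝ :=
  Set.Icc (∑ n ∈ Finset.Icc 1 k, betaBit β u x n / β ^ n)
    ((∑ n ∈ Finset.Icc 1 k, betaBit β u x n / β ^ n) + (β ^ k)⁻¹ * (β - 1)⁻¹)

/-- The dyadic interval of order `m` containing `x`: `[j/2^m, (j+1)/2^m)`,
the last one (containing 1) being `[1 - 2^{-m}, 1]`. -/
noncomputable def dyadic (m : ℕ) (x : ℝ) : Set ℝ :=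
  if 1 - ((2:ℝ) ^ m)⁻¹ ≤ x then Set.Icc (1 - ((2:ℝ) ^ m)⁻¹) 1
  else Set.Ico ((⌊x * 2 ^ m⌋ : ℝ) / 2 ^ m) (((⌊x * 2 ^ m⌋ : ℝ) + 1) / 2 ^ m)

/-- `k(m, u, x) = inf { k ≥ 1 : I_k(u,x) ⊆ D_m(x) } ∈ ℕ ∪ {∞}`. -/
noncomputable def kval (β : ℝ) (u : ℕ → ℝ) (x : ℝ) (m : ℕ) : ℕ∞ :=
  sInf {e : ℕ∞ | ∃ k : ℕ, e = (k : ℕ∞) ∧ 1 ≤ k ∧ betaI β u x k ⊆ dyadic m x}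

section Encoder

variable {β : ℝ} {u : ℕ → ℝ} {x : ℝ}

lemma betaIter_succ (n : ℕ) :
    betaIter β u x (n + 1) = β * betaIter β u x n - betaBit β u x (n + 1) := by
  simp only [betaIter, betaBit, Nat.add_sub_cancel]
  split_ifs <;> ring

lemma betaIter_mem_Icc (hβ : 1 < β) (hu : ∀ n, 1 ≤ n → u n ∈ Icc (1:ℝ) (β - 1)⁻¹)
    (hx : x ∈ Icc (0:ℝ) (β - 1)⁻¹) (k : ℕ) : betaIter β u x k ∈ Icc (0:ℝ) (β - 1)⁻¹ := by
  induction k with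
  | zero => exact hx
  | succ k ih =>
    obtain ⟨hy0, hy1⟩ := ih
    obtain ⟨hu1, hu2⟩ := hu (k + 1) k.succ_pos
    have hβy : β * betaIter β u x k ≤ β * (β - 1)⁻¹ := by gcongr
    have hfix : β * (β - 1)⁻¹ - 1 = (β - 1)⁻¹ := by field_simp [(sub_pos.2 hβ).ne']; ring
    simp only [betaIter]
    split_ifs
    · exact ⟨by positivity, by linarith⟩
    · exact ⟨by linarith, by linarith⟩

lemma sum_betaBit_add_betaIter (hβ : β ≠ 0) (k : ℕ) :
    ∑ n ∈ Finset.Icc 1 k, betaBit β u x n / β ^ n + betaIter β u x k / β ^ k = x := by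
  induction k with
  | zero => simp [betaIter]
  | succ k ih =>
    conv_rhs => rw [← ih]
    rw [Finset.sum_Icc_succ_top k.succ_pos, betaIter_succ]
    field_simp
    ring

lemma betaI_subset_closedBall (hβ : 1 < β) (hu : ∀ n, 1 ≤ n → u n ∈ Icc (1:ℝ) (β - 1)⁻¹)
    (hx : x ∈ Icc (0:ℝ) (β - 1)⁻¹) (k : ℕ) :
    betaI β u x k ⊆ Metric.closedBall x ((β ^ k)⁻¹ * (β - 1)⁻¹) := by
  have hβk : 0 < β ^ k := by positivity
  have hx_eq := sum_betaBit_add_betaIter (u := u) (x := x) (by positivity) k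
  obtain ⟨hy0, hy1⟩ := betaIter_mem_Icc hβ hu hx k
  have hrem : betaIter β u x k / β ^ k ≤ (β ^ k)⁻¹ * (β - 1)⁻¹ := by
    rw [div_eq_inv_mul]; gcongr
  have hrem0 : 0 ≤ betaIter β u x k / β ^ k := by positivity
  rw [Real.closedBall_eq_Icc]
  exact Icc_subset_Icc (by linarith) (by linarith)

end Encoder

section Dyadic

variable {m : ℕ} {x : ℝ}

lemma sub_le_of_mem_dyadic {y z : ℝ} (hy : y ∈ dyadic m x) (hz : z ∈ dyadic m x) :
    z - y ≤ ((2:ℝ) ^ m)⁻¹ := by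
  unfold dyadic at hy hz
  split_ifs at hy hz
  · linarith [hy.1, hz.2]
  · rw [add_div, one_div] at hz
    linarith [hy.1, hz.2]

lemma closedBall_subset_dyadic {r : ℝ} (hx : x ∈ Icc (0:ℝ) 1)
    (hfar : ∀ j : ℕ, j ≤ 2 ^ m → r < dist x (j / 2 ^ m)) :
    Metric.closedBall x r ⊆ dyadic m x := by
  have h2m : (0:ℝ) < 2 ^ m := by positivity
  rw [Real.closedBall_eq_Icc]
  unfold dyadic
  split_ifs with hlast
  · have h1 := hfar (2 ^ m - 1) (Nat.sub_le _ _)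
    have h2 := hfar (2 ^ m) le_rfl
    rw [Nat.cast_sub Nat.one_le_two_pow, Nat.cast_pow, Nat.cast_two, Nat.cast_one, sub_div,
      div_self h2m.ne', one_div, Real.dist_eq, abs_of_nonneg (by linarith)] at h1
    rw [Nat.cast_pow, Nat.cast_two, div_self h2m.ne', Real.dist_eq,
      abs_of_nonpos (by linarith [hx.2])] at h2
    exact Icc_subset_Icc (by linarith) (by linarith)
  · rw [not_le] at hlast
    set j := ⌊x * 2 ^ m⌋₊
    have hj_le : (j : ℝ) ≤ x * 2 ^ m := Nat.floor_le (by positivity [hx.1])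
    have hj_lt : x * 2 ^ m < j + 1 := Nat.lt_floor_add_one _
    have hx_lt : x * 2 ^ m < 2 ^ m - 1 := by
      have := mul_lt_mul_of_pos_right hlast h2m
      rwa [sub_mul, one_mul, inv_mul_cancel₀ h2m.ne'] at this
    have hj_succ : j + 1 ≤ 2 ^ m := by
      have : ((j + 1 : ℕ) : ℝ) < ((2 ^ m : ℕ) : ℝ) := by push_cast; linarith
      exact_mod_cast this.le
    have h1 := hfar j (by omega)
    have h2 := hfar (j + 1) hj_succ
    rw [Real.dist_eq, abs_of_nonneg (by rw [sub_nonneg, div_le_iff₀ h2m]; exact hj_le)] at h1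
    rw [Real.dist_eq, abs_of_nonpos (by rw [sub_nonpos, le_div_iff₀ h2m]; push_cast; linarith)]
      at h2
    rw [← natCast_floor_eq_intCast_floor (by positivity [hx.1])]
    push_cast at h2 ⊢
    exact Icc_subset_Ico (by linarith) (by linarith)

end Dyadic

section Kval

variable {β : ℝ} {u : ℕ → ℝ} {x : ℝ} {m : ℕ}

lemma kval_le_of_betaI_subset {k : ℕ} (hk : 1 ≤ k) (h : betaI β u x k ⊆ dyadic m x) :
    kval β u x m ≤ k :=
  sInf_le ⟨k, rfl, hk, h⟩

lemma two_pow_le_pow_of_betaI_subset (hβ : β ∈ Ioo (1:ℝ) 2) {k : ℕ}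
    (h : betaI β u x k ⊆ dyadic m x) : (2:ℝ) ^ m ≤ β ^ k := by
  obtain ⟨hβ1, hβ2⟩ := hβ
  have hβ1' : 0 < β - 1 := sub_pos.2 hβ1
  set a := ∑ n ∈ Finset.Icc 1 k, betaBit β u x n / β ^ n
  set L := (β ^ k)⁻¹ * (β - 1)⁻¹
  have hL : 0 ≤ L := by positivity
  have ha : a ∈ betaI β u x k := ⟨le_rfl, by linarith⟩
  have haL : a + L ∈ betaI β u x k := ⟨by linarith, le_rfl⟩
  have hlen := sub_le_of_mem_dyadic (h ha) (h haL)
  have hinv : 1 ≤ (β - 1)⁻¹ := (one_le_inv₀ hβ1').2 (by linarith)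
  rw [← inv_le_inv₀ (by positivity) (by positivity)]
  calc (β ^ k)⁻¹ ≤ L := le_mul_of_one_le_right (by positivity) hinv
    _ ≤ ((2:ℝ) ^ m)⁻¹ := by linarith

lemma log_div_le_of_kval_eq (hβ : β ∈ Ioo (1:ℝ) 2) {j : ℕ} (h : kval β u x m = j) :
    (m : ℝ) * log 2 / log β ≤ j := by
  have hne : {e : ℕ∞ | ∃ k : ℕ, e = k ∧ 1 ≤ k ∧ betaI β u x k ⊆ dyadic m x}.Nonempty := by
    by_contra hempty
    rw [not_nonempty_iff_eq_empty] at hempty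
    simp [kval, hempty] at h
  obtain ⟨k, hjk, -, hsub⟩ := csInf_mem hne
  rw [← kval, h] at hjk
  rw [Nat.cast_inj.1 hjk, div_le_iff₀ (log_pos hβ.1), ← log_pow, ← log_pow]
  exact log_le_log (by positivity) (two_pow_le_pow_of_betaI_subset hβ hsub)

lemma exists_kval_eq_and_abs_sub_le (hβ : β ∈ Ioo (1:ℝ) 2)
    (hu : ∀ n, 1 ≤ n → u n ∈ Icc (1:ℝ) (β - 1)⁻¹) (hx : x ∈ Icc (0:ℝ) 1) {t : ℝ} (ht : 1 ≤ t)
    (hfar : ∀ j : ℕ, j ≤ 2 ^ m →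
      (β ^ ⌊(m : ℝ) * log 2 / log β + t⌋₊)⁻¹ * (β - 1)⁻¹ < dist x (j / 2 ^ m)) :
    ∃ j : ℕ, kval β u x m = j ∧ |(j : ℝ) - m * log 2 / log β| ≤ t := by
  set K := ⌊(m : ℝ) * log 2 / log β + t⌋₊
  have hc : 0 ≤ (m : ℝ) * log 2 / log β := by
    have := log_pos hβ.1
    have := log_pos one_lt_two
    positivity
  have hK : 1 ≤ K := Nat.le_floor (by push_cast; linarith)
  have hx' : x ∈ Icc (0:ℝ) (β - 1)⁻¹ :=
    ⟨hx.1, hx.2.trans ((one_le_inv₀ (sub_pos.2 hβ.1)).2 (by linarith [hβ.2]))⟩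
  have hle : kval β u x m ≤ K := kval_le_of_betaI_subset hK
    ((betaI_subset_closedBall hβ.1 hu hx' K).trans (closedBall_subset_dyadic hx hfar))
  obtain ⟨j, hj⟩ := ENat.ne_top_iff_exists.1 (ne_top_of_le_ne_top (ENat.natCast_ne_top K) hle)
  have hjK : (j : ℝ) ≤ K := by rw [← hj] at hle; exact_mod_cast hle
  refine ⟨j, hj.symm, abs_le.2 ⟨?_, ?_⟩⟩
  · linarith [log_div_le_of_kval_eq hβ hj.symm]
  · linarith [Nat.floor_le (by linarith : 0 ≤ (m : ℝ) * log 2 / log β + t)]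

end Kval

lemma two_pow_mul_rpow_le {β : ℝ} (hβ : 1 < β) (m : ℕ) (t : ℝ) :
    (2:ℝ) ^ m * β ^ t ≤ β * β ^ ⌊(m : ℝ) * log 2 / log β + t⌋₊ := by
  have hβ0 : 0 < β := by linarith
  have hc : (m : ℝ) * log 2 / log β = logb β (2 ^ m) := by rw [logb, log_pow]
  have hc0 : 0 ≤ (m : ℝ) * log 2 / log β := by
    have := log_pos hβ
    have := log_pos one_lt_two
    positivity
  calc (2:ℝ) ^ m * β ^ t = β ^ ((m : ℝ) * log 2 / log β + t) := by
        rw [rpow_add hβ0, hc, rpow_logb hβ0 hβ.ne' (by positivity)]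
    _ ≤ β ^ ((⌊(m : ℝ) * log 2 / log β + t⌋₊ + 1 : ℕ) : ℝ) :=
        rpow_le_rpow_of_exponent_le hβ.le (by push_cast; exact (Nat.lt_floor_add_one _).le)
    _ = β * β ^ ⌊(m : ℝ) * log 2 / log β + t⌋₊ := by rw [rpow_natCast, pow_succ']

lemma volume_setOf_lt_abs_kval_sub_le {β : ℝ} (hβ : β ∈ Ioo (1:ℝ) 2) {u : ℕ → ℝ}
    (hu : ∀ n, 1 ≤ n → u n ∈ Icc (1:ℝ) (β - 1)⁻¹) (m : ℕ) {t : ℝ} (ht : 1 ≤ t) :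
    volume {x ∈ Icc (0:ℝ) 1 | ∀ j : ℕ, kval β u x m = j → t < |(j : ℝ) - m * log 2 / log β|}
      ≤ ENNReal.ofReal (4 * β / (β - 1) * β ^ (-t)) := by
  set K := ⌊(m : ℝ) * log 2 / log β + t⌋₊
  set L := (β ^ K)⁻¹ * (β - 1)⁻¹
  have hnear : {x ∈ Icc (0:ℝ) 1 | ∀ j : ℕ, kval β u x m = j → t < |(j : ℝ) - m * log 2 / log β|}
      ⊆ ⋃ j ∈ Finset.range (2 ^ m + 1), Metric.closedBall ((j : ℝ) / 2 ^ m) L := by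
    rintro x ⟨hx, hbad⟩
    by_contra hfar
    simp only [mem_iUnion, Finset.mem_range, Metric.mem_closedBall, not_exists, not_le] at hfar
    obtain ⟨j, hj, hjt⟩ :=
      exists_kval_eq_and_abs_sub_le hβ hu hx ht fun j hj => hfar j (Nat.lt_succ_of_le hj)
    exact (hbad j hj).not_ge hjt
  have hβ1 : 0 < β - 1 := sub_pos.2 hβ.1
  have hcount : ((2:ℝ) ^ m + 1) * (2 * L) ≤ 4 * β / (β - 1) * β ^ (-t) := by
    have hβ0 : 0 < β := by linarith [hβ.1]
    have hscale : (2:ℝ) ^ m * (β ^ K)⁻¹ ≤ β * (β ^ t)⁻¹ := by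
      rw [← div_eq_mul_inv, ← div_eq_mul_inv, div_le_div_iff₀ (by positivity) (by positivity)]
      exact two_pow_mul_rpow_le hβ.1 m t
    have h1 : (1:ℝ) ≤ 2 ^ m := one_le_pow₀ one_le_two
    calc ((2:ℝ) ^ m + 1) * (2 * L) ≤ (2 * 2 ^ m) * (2 * L) := by gcongr; linarith
      _ = 4 * ((2:ℝ) ^ m * (β ^ K)⁻¹) * (β - 1)⁻¹ := by ring
      _ ≤ 4 * (β * (β ^ t)⁻¹) * (β - 1)⁻¹ := by gcongr
      _ = 4 * β / (β - 1) * β ^ (-t) := by rw [rpow_neg hβ0.le]; ring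
  calc volume {x ∈ Icc (0:ℝ) 1 | ∀ j : ℕ, kval β u x m = j → t < |(j : ℝ) - m * log 2 / log β|}
      ≤ ∑ j ∈ Finset.range (2 ^ m + 1), volume (Metric.closedBall ((j : ℝ) / 2 ^ m) L) :=
        (measure_mono hnear).trans (measure_biUnion_finset_le _ _)
    _ = ENNReal.ofReal (((2:ℝ) ^ m + 1) * (2 * L)) := by
        simp only [Real.volume_closedBall, Finset.sum_const, Finset.card_range, nsmul_eq_mul]
        rw [← ENNReal.ofReal_natCast, ← ENNReal.ofReal_mul (by positivity)]
        push_cast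
        rfl
    _ ≤ ENNReal.ofReal (4 * β / (β - 1) * β ^ (-t)) := ENNReal.ofReal_le_ofReal hcount

theorem stmt_2_general (β : ℝ) (hβ : β ∈ Set.Ioo (1:ℝ) 2) (u : ℕ → ℝ)
    (hu : ∀ n, 1 ≤ n → u n ∈ Set.Icc (1:ℝ) (β - 1)⁻¹)
    (n : ℕ → ℝ) (hninf : Filter.Tendsto n Filter.atTop Filter.atTop)
    (ε : ℝ) (hε : 0 < ε) :
    Filter.Tendsto
      (fun m : ℕ => volume {x ∈ Set.Icc (0:ℝ) 1 |
        ∀ j : ℕ, kval β u x m = (j : ℕ∞) →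
          ε * n m < |(j : ℝ) - (m : ℝ) * Real.log 2 / Real.log β|})
      Filter.atTop (nhds 0) := by
  have hεn : Tendsto (fun m => ε * n m) atTop atTop := hninf.const_mul_atTop hε
  have hdecay : Tendsto (fun m => ENNReal.ofReal (4 * β / (β - 1) * β ^ (-(ε * n m)))) atTop
      (nhds 0) := by
    have := ((tendsto_rpow_atBot_of_base_gt_one β hβ.1).comp
      (tendsto_neg_atTop_atBot.comp hεn)).const_mul (4 * β / (β - 1))
    rw [mul_zero] at this
    simpa using ENNReal.tendsto_ofReal this
  refine tendsto_of_tendsto_of_tendsto_of_le_of_le' tendsto_const_nhds hdecay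
    (Eventually.of_forall fun _ => zero_le) ?_
  filter_upwards [hεn.eventually_ge_atTop 1] with m hm
  exact volume_setOf_lt_abs_kval_sub_le hβ hu m hm

/-- for any positive sequence `n_m → ∞` and any `ε > 0`, the Lebesgue measure
of `{x ∈ [0,1] : |k(m,u,x) − m·log 2/log β| > ε·n_m}` tends to `0` as `m → ∞`
(the inequality is understood to hold whenever `k(m,u,x) = ∞`), i.e.
`(1/n_m)(k(m,u,x) − m·log 2/log β)` converges to `0` in probability. -/
theorem stmt_2 (β : ℝ) (hβ : β ∈ Set.Ioo (1:ℝ) 2) (u : ℕ → ℝ)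
    (hu : ∀ n, 1 ≤ n → u n ∈ Set.Icc (1:ℝ) (β - 1)⁻¹)
    (n : ℕ → ℝ) (hn : ∀ m, 0 < n m) (hninf : Filter.Tendsto n Filter.atTop Filter.atTop)
    (ε : ℝ) (hε : 0 < ε) :
    Filter.Tendsto
      (fun m : ℕ => volume {x ∈ Set.Icc (0:ℝ) 1 |
        ∀ j : ℕ, kval β u x m = (j : ℕ∞) →
          ε * n m < |(j : ℝ) - (m : ℝ) * Real.log 2 / Real.log β|})
      Filter.atTop (nhds 0) :=
  stmt_2_general β hβ u hu n hninf ε hε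
end

section
/- Fix β ∈ (1,2), a threshold sequence u = (u_n)_{n≥1} with each u_n ∈ [1,(β−1)⁻¹], and x ∈ [0,1]. Then the bits b_n = b_n(u,x) produced by the β-encoder give a β-expansion of x: the series Σ_{n=1}^∞ b_n β^{−n} converges and equals x. -/
open MeasureTheory Filter Set Real
open Topology

/-- the bits produced by the β-encoder give a β-expansion of `x`:
the series `Σ_{n=1}^∞ b_n β^{−n}` converges and equals `x`. -/
theorem stmt_9 (β : ℝ) (hβ : β ∈ Set.Ioo (1:ℝ) 2) (u : ℕ → ℝ)
    (hu : ∀ n, 1 ≤ n → u n ∈ Set.Icc (1:ℝ) (β - 1)⁻¹)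
    (x : ℝ) (hx : x ∈ Set.Icc (0:ℝ) 1) :
    HasSum (fun n : ℕ => betaBit β u x (n + 1) / β ^ (n + 1)) x := by
  obtain ⟨hβ1, hβ2⟩ := hβ
  have hβ0 : (0:ℝ) < β := by linarith
  have hb1 : (0:ℝ) < β - 1 := by linarith
  have hb1' : (β - 1) * (β - 1)⁻¹ = 1 := mul_inv_cancel₀ (ne_of_gt hb1)
  -- invariant: the orbit stays in [0, (β-1)⁻¹]
  have hinv : ∀ n, betaIter β u x n ∈ Set.Icc (0:ℝ) (β - 1)⁻¹ := by
    intro n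
    induction n with
    | zero =>
      refine ⟨hx.1, ?_⟩
      have h1 : (1:ℝ) ≤ (β - 1)⁻¹ := by nlinarith [hx.2]
      exact le_trans hx.2 h1
    | succ k ih =>
      obtain ⟨hy0, hy1⟩ := ih
      obtain ⟨hu1, hu2⟩ := hu (k + 1) (by omega)
      simp only [betaIter]
      split_ifs with h
      · exact ⟨by positivity, le_trans h.le hu2⟩
      · constructor
        · push_neg at h; linarith
        · nlinarith
  -- bits are 0 or 1
  have hbit : ∀ n, 0 ≤ betaBit β u x n ∧ betaBit β u x n ≤ 1 := by
    intro n; unfold betaBit; split_ifs <;> norm_num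
  -- partial sum identity
  have hkey : ∀ k, ∑ i ∈ Finset.range k, betaBit β u x (i + 1) / β ^ (i + 1)
      = x - betaIter β u x k / β ^ k := by
    intro k
    induction k with
    | zero => simp [betaIter]
    | succ k ih =>
      rw [Finset.sum_range_succ, ih]
      have hpow : (β : ℝ) ^ k ≠ 0 := by positivity
      have hpow1 : (β : ℝ) ^ (k + 1) ≠ 0 := by positivity
      simp only [betaBit, betaIter, Nat.add_sub_cancel]
      split_ifs with h
      · field_simp; ring
      · field_simp; ring
  -- the tail tends to 0
  have h0 : Tendsto (fun k => betaIter β u x k / β ^ k) atTop (𝓝 0) := by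
    have hlt : β⁻¹ < 1 := inv_lt_one_of_one_lt₀ hβ1
    have hg : Tendsto (fun k : ℕ => (β - 1)⁻¹ * (β⁻¹) ^ k) atTop (𝓝 0) := by
      have := (tendsto_pow_atTop_nhds_zero_of_lt_one (by positivity) hlt).const_mul
        ((β - 1)⁻¹)
      simpa using this
    apply squeeze_zero_norm _ hg
    intro k
    have hk0 := (hinv k).1
    have hk1 := (hinv k).2
    have hpow : (0:ℝ) < β ^ k := by positivity
    rw [Real.norm_eq_abs, abs_of_nonneg (div_nonneg hk0 hpow.le), div_eq_mul_inv,
      ← inv_pow]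
    exact mul_le_mul_of_nonneg_right hk1 (by positivity)
  rw [hasSum_iff_tendsto_nat_of_nonneg (fun i => div_nonneg (hbit (i + 1)).1
    (by positivity))]
  simp only [hkey]
  simpa using tendsto_const_nhds.sub h0
end
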